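/- arXiv:1710.01348 — 2 statements merged into one kernel-verified Lean document; each statement's English description precedes it below -/
import Mathlib

section
/- For every natural number n and real number v, the Weierstrass-type integral \int_{-\infty}^{\infty} e^{-(x-y)^2} H_n(x) dx equals \sqrt{\pi} \, 2^n y^n, where H_n is the physicists' Hermite polynomial. -/
open MeasureTheory

def hermiteH : ℕ → ℝ → ℝ
  | 0, _ => 1
  | 1, x => 2 * x
  | n + 2, x => 2 * x * hermiteH (n + 1) x - 2 * ((n : ℝ) + 1) * hermiteH n x

/-!
Differentiating the recurrence gives `H_n' = 2n H_{n-1}`, hence `H_{n+1} = 2x H_n - H_n'`, and so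
`(e^{-(x-y)^2} H_n)' = 2y e^{-(x-y)^2} H_n - e^{-(x-y)^2} H_{n+1}`. The left side integrates to `0`
over `ℝ`, so `∫ e^{-(x-y)^2} H_{n+1} = 2y ∫ e^{-(x-y)^2} H_n`, and `∫ e^{-(x-y)^2} = √π` starts the
induction.
-/

open Polynomial Real

-- For `n = 0` the subtraction `n - 1` truncates, but the term it appears in is multiplied by `0`.
lemma hermiteH_succ (n : ℕ) (x : ℝ) :
    hermiteH (n + 1) x = 2 * x * hermiteH n x - 2 * n * hermiteH (n - 1) x := by
  cases n with
  | zero => simp [hermiteH]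
  | succ m => simp only [hermiteH]; push_cast; ring

lemma exists_polynomial_eval_eq_hermiteH : ∀ n : ℕ, ∃ p : ℝ[X], ∀ x, p.eval x = hermiteH n x
  | 0 => ⟨1, by simp [hermiteH]⟩
  | 1 => ⟨C 2 * X, by simp [hermiteH]⟩
  | n + 2 => by
    obtain ⟨p, hp⟩ := exists_polynomial_eval_eq_hermiteH (n + 1)
    obtain ⟨q, hq⟩ := exists_polynomial_eval_eq_hermiteH n
    exact ⟨C 2 * X * p - C (2 * ((n : ℝ) + 1)) * q, fun x => by simp [hermiteH, hp, hq]⟩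

lemma hasDerivAt_hermiteH :
    ∀ (n : ℕ) (x : ℝ), HasDerivAt (hermiteH n) (2 * n * hermiteH (n - 1) x) x
  | 0, x => by simpa [hermiteH] using hasDerivAt_const x (1 : ℝ)
  | 1, x => by simpa [hermiteH] using (hasDerivAt_id x).const_mul (2 : ℝ)
  | n + 2, x => by
    have hfun : hermiteH (n + 2)
        = fun x => 2 * x * hermiteH (n + 1) x - 2 * ((n : ℝ) + 1) * hermiteH n x := rfl
    rw [hfun]
    refine ((((hasDerivAt_id x).const_mul 2).fun_mul (hasDerivAt_hermiteH (n + 1) x)).fun_sub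
      ((hasDerivAt_hermiteH n x).const_mul (2 * ((n : ℝ) + 1)))).congr_deriv ?_
    rw [show n + 2 - 1 = n + 1 from rfl, hermiteH_succ n x, id]
    push_cast
    ring

lemma integrable_exp_neg_mul_sq_sub_mul_eval {b : ℝ} (hb : 0 < b) (y : ℝ) (p : ℝ[X]) :
    Integrable fun x => exp (-b * (x - y) ^ 2) * p.eval x := by
  suffices h : ∀ q : ℝ[X], Integrable fun x => exp (-b * x ^ 2) * q.eval x by
    refine ((h (p.comp (X + C y))).comp_sub_right y).congr (.of_forall fun x => ?_)
    simp
  intro q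
  induction q using Polynomial.induction_on' with
  | add p q hp hq => exact (hp.add hq).congr (.of_forall fun x => by simp [mul_add])
  | monomial k a =>
    have hk := (integrable_rpow_mul_exp_neg_mul_sq hb (s := k)
      (neg_one_lt_zero.trans_le k.cast_nonneg)).const_mul a
    refine hk.congr (.of_forall fun x => ?_)
    simp only [rpow_natCast, eval_monomial]
    ring

lemma integrable_exp_neg_sq_sub_mul_hermiteH (y : ℝ) (n : ℕ) :
    Integrable fun x => exp (-(x - y) ^ 2) * hermiteH n x := by
  obtain ⟨p, hp⟩ := exists_polynomial_eval_eq_hermiteH n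
  simpa [hp] using integrable_exp_neg_mul_sq_sub_mul_eval one_pos y p

lemma hasDerivAt_exp_neg_sq_sub_mul_hermiteH (y : ℝ) (n : ℕ) (x : ℝ) :
    HasDerivAt (fun x => exp (-(x - y) ^ 2) * hermiteH n x)
      (2 * y * (exp (-(x - y) ^ 2) * hermiteH n x) - exp (-(x - y) ^ 2) * hermiteH (n + 1) x)
      x := by
  have hgauss :
      HasDerivAt (fun x => exp (-(x - y) ^ 2)) (exp (-(x - y) ^ 2) * (-2 * (x - y))) x := by
    refine (((hasDerivAt_id x).sub_const y).fun_pow 2).fun_neg.exp.congr_deriv ?_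
    simp
  refine (hgauss.fun_mul (hasDerivAt_hermiteH n x)).congr_deriv ?_
  rw [hermiteH_succ]
  ring

lemma integral_exp_neg_sq_sub_mul_hermiteH_succ (y : ℝ) (n : ℕ) :
    ∫ x, exp (-(x - y) ^ 2) * hermiteH (n + 1) x
      = 2 * y * ∫ x, exp (-(x - y) ^ 2) * hermiteH n x := by
  have hn := integrable_exp_neg_sq_sub_mul_hermiteH y n
  have hn1 := integrable_exp_neg_sq_sub_mul_hermiteH y (n + 1)
  have hzero := integral_eq_zero_of_hasDerivAt_of_integrable
    (hasDerivAt_exp_neg_sq_sub_mul_hermiteH y n) ((hn.const_mul (2 * y)).sub hn1) hn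
  rw [integral_sub (hn.const_mul (2 * y)) hn1, integral_const_mul] at hzero
  linarith

theorem weierstrass_hermite_integral (n : ℕ) (y : ℝ) :
    ∫ x : ℝ, Real.exp (-(x - y) ^ 2) * hermiteH n x
      = Real.sqrt Real.pi * 2 ^ n * y ^ n := by
  induction n with
  | zero =>
    simpa [hermiteH, integral_sub_right_eq_self (fun x => exp (-x ^ 2)) y]
      using integral_gaussian 1
  | succ n ih =>
    rw [integral_exp_neg_sq_sub_mul_hermiteH_succ, ih]
    ring
end

section
/- (Mehler's formula at y = 0.) For real x and |\rho| < 1, \sum_{n=0}^{\infty} (\rho^n/(2^n n!)) H_n(x) H_n(0) = (1/\sqrt{1-\rho^2}) \exp( -x^2 \rho^2 / (1-\rho^2) ), where H_n is the physicists' Hermite polynomial and H_{2m}(0) = (-1)^m (2m)!/m!, H_{2m+1}(0) = 0. -/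
open MeasureTheory Complex

theorem hermiteH_two_mul_add_one_zero (m : ℕ) : hermiteH (2 * m + 1) 0 = 0 := by
  induction m with
  | zero => simp [hermiteH]
  | succ m ih => rw [show 2 * (m + 1) + 1 = 2 * m + 1 + 2 by ring, hermiteH, ih]; simp

theorem hermiteH_two_mul_zero (m : ℕ) :
    hermiteH (2 * m) 0 = (-1 : ℝ) ^ m * ((2 * m).factorial : ℝ) / (m.factorial : ℝ) := by
  induction m with
  | zero => simp [hermiteH]
  | succ m ih =>
    rw [show 2 * (m + 1) = 2 * m + 2 by ring, hermiteH, ih, hermiteH_two_mul_add_one_zero,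
      Nat.factorial_succ (2 * m + 1), Nat.factorial_succ (2 * m), Nat.factorial_succ m]
    push_cast
    field_simp
    ring

noncomputable def hermiteIntegrand (x : ℝ) (n : ℕ) (t : ℝ) : ℂ :=
  (x + t * I) ^ n * cexp (-t ^ 2)

theorem norm_hermiteIntegrand (x : ℝ) (n : ℕ) (t : ℝ) :
    ‖hermiteIntegrand x n t‖ = ‖(x + t * I : ℂ)‖ ^ n * Real.exp (-t ^ 2) := by
  rw [hermiteIntegrand, norm_mul, norm_pow, norm_exp]
  norm_cast

theorem norm_hermiteIntegrand_le (x : ℝ) (n : ℕ) (t : ℝ) :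
    ‖hermiteIntegrand x n t‖
      ≤ n.factorial * Real.exp (|x| + 1 / 2) * Real.exp (-(1 / 2) * t ^ 2) := by
  have hz : ‖(x + t * I : ℂ)‖ ≤ |x| + |t| := by
    simpa using norm_add_le (x : ℂ) (t * I)
  have hpow : ‖(x + t * I : ℂ)‖ ^ n ≤ n.factorial * Real.exp (|x| + |t|) := by
    have := Real.pow_div_factorial_le_exp _ (norm_nonneg (x + t * I : ℂ)) n
    rw [div_le_iff₀ (by positivity)] at this
    nlinarith [Real.exp_le_exp.2 hz, (Nat.cast_pos (α := ℝ)).2 n.factorial_pos]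
  have hexp : Real.exp (|x| + |t|) * Real.exp (-t ^ 2)
      ≤ Real.exp (|x| + 1 / 2) * Real.exp (-(1 / 2) * t ^ 2) := by
    rw [← Real.exp_add, ← Real.exp_add, Real.exp_le_exp]
    nlinarith [sq_nonneg (|t| - 1), sq_abs t]
  rw [norm_hermiteIntegrand, mul_assoc _ (Real.exp _)]
  calc ‖(x + t * I : ℂ)‖ ^ n * Real.exp (-t ^ 2)
      ≤ n.factorial * Real.exp (|x| + |t|) * Real.exp (-t ^ 2) := by gcongr
    _ ≤ _ := by rw [mul_assoc]; gcongr

theorem integrable_hermiteIntegrand (x : ℝ) (n : ℕ) : Integrable (hermiteIntegrand x n) :=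
  ((integrable_exp_neg_mul_sq (by norm_num : (0 : ℝ) < 1 / 2)).const_mul _).mono'
    (by unfold hermiteIntegrand; fun_prop) (.of_forall (norm_hermiteIntegrand_le x n))

theorem hasDerivAt_hermiteIntegrand (x : ℝ) (n : ℕ) (t : ℝ) :
    HasDerivAt (hermiteIntegrand x n) (I * (n * hermiteIntegrand x (n - 1) t
      + 2 * hermiteIntegrand x (n + 1) t - 2 * x * hermiteIntegrand x n t)) t := by
  have hbase : HasDerivAt (fun s : ℂ => (x : ℂ) + s * I) I t := by
    simpa using ((hasDerivAt_id (t : ℂ)).mul_const I).const_add (x : ℂ)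
  have hgauss : HasDerivAt (fun s : ℂ => cexp (-s ^ 2)) (cexp (-t ^ 2) * (-(2 * t))) t := by
    simpa using ((hasDerivAt_pow 2 (t : ℂ)).neg).cexp
  refine (((hbase.fun_pow n).fun_mul hgauss).comp_ofReal).congr_deriv ?_
  unfold hermiteIntegrand
  -- `t = I * (x - (x + t * I))` turns the factor `-2 t` into a polynomial in `x + t * I`
  linear_combination (-2 * ((x : ℂ) + t * I) ^ n * cexp (-(t : ℂ) ^ 2) * t) * I_sq

theorem integral_hermiteIntegrand_succ (x : ℝ) (n : ℕ) :
    ∫ t, hermiteIntegrand x (n + 1) t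
      = x * (∫ t, hermiteIntegrand x n t) - n / 2 * ∫ t, hermiteIntegrand x (n - 1) t := by
  have hint := integrable_hermiteIntegrand x
  have h := integral_eq_zero_of_hasDerivAt_of_integrable (hasDerivAt_hermiteIntegrand x n)
    (((((hint _).const_mul _).add ((hint _).const_mul _)).sub ((hint _).const_mul _)).const_mul _)
    (hint n)
  rw [integral_const_mul, integral_sub, integral_add, integral_const_mul, integral_const_mul,
    integral_const_mul, mul_eq_zero] at h
  · rcases h with h | h
    · exact absurd h I_ne_zero
    · linear_combination h / 2
  all_goals first
    | exact (hint _).const_mul _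
    | exact ((hint _).const_mul _).add ((hint _).const_mul _)

theorem integral_cexp_mul_sq_sub_sq (x c : ℝ) (hc : -1 < c) :
    ∫ t : ℝ, cexp (c * (x + t * I) ^ 2 - t ^ 2)
      = (√(Real.pi / (1 + c)) * Real.exp (c * x ^ 2 / (1 + c)) : ℝ) := by
  have hc' : (0 : ℝ) < 1 + c := by linarith
  have hquad : ∀ t : ℝ, c * (x + t * I) ^ 2 - t ^ 2
      = -(1 + c : ℂ) * t ^ 2 + 2 * c * x * I * t + c * x ^ 2 := by
    intro t
    linear_combination (c * t ^ 2 : ℂ) * I_sq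
  simp_rw [hquad]
  rw [integral_cexp_quadratic (by norm_cast; linarith)]
  have hroot : (Real.pi / -(-(1 + c : ℂ))) ^ (1 / 2 : ℂ) = (√(Real.pi / (1 + c)) : ℝ) := by
    rw [neg_neg, Real.sqrt_eq_rpow, Complex.ofReal_cpow (by positivity)]
    push_cast
    ring_nf
  have hexp :
      c * x ^ 2 - (2 * c * x * I) ^ 2 / (4 * -(1 + c : ℂ)) = (c * x ^ 2 / (1 + c) : ℝ) := by
    have : (1 + c : ℂ) ≠ 0 := by norm_cast; linarith
    push_cast
    field_simp
    linear_combination (4 * (c : ℂ) ^ 2 * x ^ 2) * I_sq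
  rw [hroot, hexp, ofReal_mul, ofReal_exp]

theorem integral_hermiteIntegrand (x : ℝ) (n : ℕ) :
    ∫ t, hermiteIntegrand x n t = (√Real.pi * hermiteH n x / 2 ^ n : ℝ) := by
  have h₀ : ∫ t, hermiteIntegrand x 0 t = (√Real.pi * hermiteH 0 x / 2 ^ 0 : ℝ) := by
    simpa [hermiteIntegrand, hermiteH] using integral_cexp_mul_sq_sub_sq x 0 (by norm_num)
  induction n using Nat.twoStepInduction with
  | zero => exact h₀
  | one =>
    rw [integral_hermiteIntegrand_succ, h₀]
    simp [hermiteH]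
    ring
  | more n ih₀ ih₁ =>
    rw [integral_hermiteIntegrand_succ, ih₁, Nat.add_sub_cancel, ih₀, hermiteH]
    push_cast
    field_simp
    ring

theorem hasSum_integral_hermiteIntegrand_two_mul (x : ℝ) {c : ℂ} (hc : ‖c‖ < 1) :
    HasSum (fun m : ℕ => c ^ m / m.factorial * ∫ t, hermiteIntegrand x (2 * m) t)
      (∫ t : ℝ, cexp (c * (x + t * I) ^ 2 - t ^ 2)) := by
  have hexp_real (a : ℝ) : HasSum (fun m : ℕ => a ^ m / m.factorial) (Real.exp a) := by
    simpa [Real.exp_eq_exp_ℝ] using NormedSpace.expSeries_div_hasSum_exp a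
  simp_rw [← integral_const_mul]
  refine hasSum_integral_of_dominated_convergence
    (fun m t => (‖c‖ * (x ^ 2 + t ^ 2)) ^ m / m.factorial * Real.exp (-t ^ 2))
    (fun m => ((integrable_hermiteIntegrand x _).const_mul _).aestronglyMeasurable)
    (fun m => .of_forall fun t => le_of_eq ?_)
    (.of_forall fun t => ((hexp_real _).mul_right _).summable) ?_ (.of_forall fun t => ?_)
  · rw [norm_mul, norm_hermiteIntegrand, pow_mul, Complex.sq_norm, normSq_add_mul_I, norm_div,
      norm_pow, norm_natCast, mul_pow]
    ring
  · simp_rw [((hexp_real _).mul_right _).tsum_eq, ← Real.exp_add]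
    have hdecay := (integrable_exp_neg_mul_sq (sub_pos.2 hc)).const_mul (Real.exp (‖c‖ * x ^ 2))
    refine hdecay.congr (.of_forall fun t => ?_)
    dsimp only
    rw [← Real.exp_add]
    ring_nf
  · have hexp : HasSum (fun m : ℕ => (c * (x + t * I) ^ 2) ^ m / m.factorial)
        (cexp (c * (x + t * I) ^ 2)) := by
      simpa [exp_eq_exp_ℂ] using NormedSpace.expSeries_div_hasSum_exp (c * (x + t * I) ^ 2)
    rw [sub_eq_add_neg, Complex.exp_add]
    refine (hexp.mul_right (cexp (-t ^ 2))).congr_fun fun m => ?_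
    rw [hermiteIntegrand, pow_mul, mul_pow]
    ring

theorem hasSum_hermiteH_two_mul (x : ℝ) {c : ℝ} (hc : |c| < 1) :
    HasSum (fun m : ℕ => c ^ m / (4 ^ m * m.factorial) * hermiteH (2 * m) x)
      (Real.exp (c * x ^ 2 / (1 + c)) / √(1 + c)) := by
  have h := hasSum_integral_hermiteIntegrand_two_mul x (c := c) (by simpa using hc)
  rw [integral_cexp_mul_sq_sub_sq x c (by linarith [neg_abs_le c])] at h
  simp_rw [integral_hermiteIntegrand] at h
  have hπ : √Real.pi ≠ 0 := (Real.sqrt_pos.2 Real.pi_pos).ne'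
  rw [← hasSum_mul_left_iff hπ, ← hasSum_ofReal]
  convert h using 1
  · ext m
    push_cast
    rw [pow_mul]
    field_simp
    ring
  · rw [Real.sqrt_div' _ (by linarith [neg_abs_le c])]
    push_cast
    ring

theorem mehler_at_zero (x ρ : ℝ) (hρ : |ρ| < 1) :
    (∑' n : ℕ, (ρ ^ n / (2 ^ n * (n.factorial : ℝ))) * hermiteH n x * hermiteH n 0
        = (1 / Real.sqrt (1 - ρ ^ 2)) * Real.exp (-x ^ 2 * ρ ^ 2 / (1 - ρ ^ 2))) ∧
    (∀ m : ℕ, hermiteH (2 * m) 0 = (-1 : ℝ) ^ m * ((2 * m).factorial : ℝ) / (m.factorial : ℝ) ∧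
      hermiteH (2 * m + 1) 0 = 0) := by
  refine ⟨?_, fun m => ⟨hermiteH_two_mul_zero m, hermiteH_two_mul_add_one_zero m⟩⟩
  have hρ2 : |-ρ ^ 2| < 1 := by
    simpa [abs_neg, sq_abs] using pow_lt_one₀ (abs_nonneg ρ) hρ two_ne_zero
  have heven := hasSum_hermiteH_two_mul x hρ2
  have hodd : ∀ n ∉ Set.range (2 * ·),
      ρ ^ n / (2 ^ n * (n.factorial : ℝ)) * hermiteH n x * hermiteH n 0 = 0 := by
    intro n hn
    obtain ⟨m, rfl | rfl⟩ := Nat.even_or_odd' n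
    · exact absurd ⟨m, rfl⟩ hn
    · rw [hermiteH_two_mul_add_one_zero, mul_zero]
  refine (((mul_right_injective₀ two_ne_zero).hasSum_iff hodd).1
    (heven.congr_fun fun m => ?_)).tsum_eq.trans ?_
  · rw [Function.comp_apply, hermiteH_two_mul_zero, pow_mul, pow_mul, neg_pow]
    field_simp
    ring
  · rw [← sub_eq_add_neg]
    ring_nf
end
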